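/- (Proposition: identifiability of the exponential network, pr:exp) Let a fully-connected layered feed-forward network of depth L with one source and one sink have activation f(x) = e^x − 1. If W, W̃ ∈ W_o are two weight families whose measured functions coincide, F_W(x) = F_{W̃}(x) for all x ∈ ℝ, then W = W̃. That is, the network with this activation is identifiable within the class W_o by exciting the source and measuring the sink. -/

import Mathlib

/-!
Every node output tends to `+∞` as `x → ∞`, and since the weights into a layer decrease
strictly with the node index, `F_j' = o(F_j)` whenever `j < j'`. By induction on `l`: if a
combination `∑ u_j F_j - ∑ v_j F̃_j` of the layer-`l` outputs of the two networks, with positive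
coefficients, converges as `x → ∞`, then its limit is `0`, `u = v`, and the networks agree below
layer `l`. At the source this combination is `(u_0 - v_0) x`. In a higher layer the lowest-index
node `j` dominates both sums, so `u_j e^{g_j} ~ v_j e^{g̃_j}` for its net inputs, i.e.
`g_j - g̃_j → log (v_j / u_j)`; but `g_j - g̃_j` is such a combination one layer down, so the
limit is `0`, `u_j = v_j`, and the weights into node `j` agree. The `j`-th terms then cancel and
the next node takes over. At the sink, with `u = v = 1`, this is the theorem.
-/

open Finset Filter

/-- Node outputs of the fully-connected layered feed-forward network with activation
`f x = e^x - 1` and layer sizes `n 0, …, n L`: `expOut n w 0 i x = x` (the source) and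
`expOut n w (l+1) i x = exp (∑_{j < n l} w^{l+1}_{ij} · expOut n w l j x) - 1`, where
`w (l+1) i j` is the weight of the edge from node `j` of layer `l` to node `i` of layer
`l + 1` (nodes are numbered `0, …, n l - 1`; the "first" node of a layer is node `0`). -/
noncomputable def expOut (n : ℕ → ℕ) (w : ℕ → ℕ → ℕ → ℝ) : ℕ → ℕ → ℝ → ℝ
  | 0, _, x => x
  | l + 1, i, x =>
      Real.exp (∑ j ∈ Finset.range (n l), w (l + 1) i j * expOut n w l j x) - 1

/-- The class `W_o` of weight families: all weights are positive and, in each layer and for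
each source node `j`, the weights are strictly decreasing in the destination node index
(`w^l_{1j} > w^l_{2j} > … > w^l_{n_l j}` in 1-based notation). -/
def Wo (L : ℕ) (n : ℕ → ℕ) (w : ℕ → ℕ → ℕ → ℝ) : Prop :=
  (∀ l < L, ∀ i < n (l + 1), ∀ j < n l, 0 < w (l + 1) i j) ∧
  (∀ l < L, ∀ j < n l, ∀ i i' : ℕ, i < i' → i' < n (l + 1) → w (l + 1) i' j < w (l + 1) i j)

open Asymptotics Real Topology

section Asymptotics

variable {α ι : Type*} {l : Filter α}

theorem tendsto_sum_mul_atTop {s : Finset ι} {a : ι → ℝ} {f : ι → α → ℝ} (hs : s.Nonempty)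
    (ha : ∀ i ∈ s, 0 < a i) (hf : ∀ i ∈ s, Tendsto (f i) l atTop) :
    Tendsto (fun x => ∑ i ∈ s, a i * f i x) l atTop := by
  induction hs using Finset.Nonempty.cons_induction with
  | singleton i =>
    simpa using (hf i (mem_singleton_self i)).const_mul_atTop (ha i (mem_singleton_self i))
  | cons i s hi hs ih =>
    simp only [sum_cons]
    exact Tendsto.atTop_add_atTop
      ((hf i (mem_cons_self i s)).const_mul_atTop (ha i (mem_cons_self i s)))
      (ih (fun j hj => ha j (mem_cons_of_mem hj)) (fun j hj => hf j (mem_cons_of_mem hj)))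

theorem isEquivalent_of_tendsto_sub {u v : α → ℝ} {c : ℝ} (h : Tendsto (u - v) l (𝓝 c))
    (hv : Tendsto v l atTop) : u ~[l] v :=
  (h.isBigO_one ℝ).trans_isLittleO
    ((isLittleO_one_left_iff ℝ).2 (tendsto_norm_atTop_atTop.comp hv))

theorem isEquivalent_sum_insert {β : Type*} [NormedAddCommGroup β] [DecidableEq ι]
    {f : ι → α → β} {i₀ : ι} {s : Finset ι} (hi₀ : i₀ ∉ s) (h : ∀ i ∈ s, f i =o[l] f i₀) :
    (fun x => ∑ i ∈ insert i₀ s, f i x) ~[l] f i₀ := by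
  have hsum : (fun x => ∑ i ∈ s, f i x) =o[l] f i₀ := by
    simpa only [Finset.sum_fn] using IsLittleO.sum h
  simp only [sum_insert hi₀]
  exact IsEquivalent.refl.add_isLittleO hsum

theorem tendsto_log_div_of_isEquivalent {g g' : α → ℝ} {a b : ℝ} (ha : 0 < a) (hb : 0 < b)
    (h : (fun x => a * exp (g x)) ~[l] fun x => b * exp (g' x)) :
    Tendsto (fun x => g x - g' x) l (𝓝 (log (b / a))) := by
  have hratio := (isEquivalent_iff_tendsto_one (Eventually.of_forall fun x => by positivity)).1 h
  have hlog := ((continuousAt_log (by positivity : b / a * 1 ≠ 0)).tendsto).comp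
    (hratio.const_mul (b / a))
  rw [mul_one] at hlog
  refine hlog.congr fun x => ?_
  simp only [Function.comp_apply, Pi.div_apply]
  rw [← log_exp (g x - g' x), exp_sub]
  congr 1
  field_simp

end Asymptotics

noncomputable def netInput (n : ℕ → ℕ) (w : ℕ → ℕ → ℕ → ℝ) (l i : ℕ) (x : ℝ) : ℝ :=
  ∑ j ∈ range (n l), w (l + 1) i j * expOut n w l j x

theorem expOut_succ (n : ℕ → ℕ) (w : ℕ → ℕ → ℕ → ℝ) (l i : ℕ) (x : ℝ) :
    expOut n w (l + 1) i x = exp (netInput n w l i x) - 1 :=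
  rfl

def AgreeBelow (n : ℕ → ℕ) (w w' : ℕ → ℕ → ℕ → ℝ) (l : ℕ) : Prop :=
  ∀ l' < l, ∀ i < n (l' + 1), ∀ j < n l', w (l' + 1) i j = w' (l' + 1) i j

section Congr

variable {n : ℕ → ℕ} {w w' : ℕ → ℕ → ℕ → ℝ}

theorem AgreeBelow.mono {l m : ℕ} (h : AgreeBelow n w w' l) (hml : m ≤ l) :
    AgreeBelow n w w' m :=
  fun l' hl' => h l' (hl'.trans_le hml)

theorem expOut_congr {l : ℕ} (h : AgreeBelow n w w' l) {j : ℕ} (hj : j < n l) :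
    expOut n w l j = expOut n w' l j := by
  induction l generalizing j with
  | zero => rfl
  | succ l ih =>
    funext x
    simp only [expOut_succ, netInput]
    congr 2
    refine sum_congr rfl fun k hk => ?_
    rw [h l l.lt_succ_self j hj k (mem_range.1 hk),
      ih (h.mono l.le_succ) (mem_range.1 hk)]

theorem netInput_congr {m i : ℕ} (h : AgreeBelow n w w' m)
    (hrow : ∀ k < n m, w (m + 1) i k = w' (m + 1) i k) :
    netInput n w m i = netInput n w' m i := by
  funext x
  refine sum_congr rfl fun k hk => ?_
  rw [hrow k (mem_range.1 hk), expOut_congr h (mem_range.1 hk)]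

end Congr

section Growth

variable {L : ℕ} {n : ℕ → ℕ} {w : ℕ → ℕ → ℕ → ℝ}

theorem tendsto_expOut_atTop (hpos : ∀ l ≤ L, 0 < n l) (hw : Wo L n w) {l i : ℕ} (hl : l ≤ L)
    (hi : i < n l) :
    Tendsto (expOut n w l i) atTop atTop := by
  induction l generalizing i with
  | zero => exact tendsto_id
  | succ l ih =>
    refine tendsto_atTop_add_const_right _ (-1) (tendsto_exp_atTop.comp ?_)
    exact tendsto_sum_mul_atTop (nonempty_range_iff.2 (hpos l (by omega)).ne')
      (fun k hk => hw.1 l (by omega) i hi k (mem_range.1 hk))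
      (fun k hk => ih (by omega) (mem_range.1 hk))

theorem tendsto_sum_mul_expOut_atTop (hpos : ∀ l ≤ L, 0 < n l) (hw : Wo L n w) {l : ℕ}
    (hl : l < L) {a : ℕ → ℝ} (ha : ∀ k < n l, 0 < a k) :
    Tendsto (fun x => ∑ k ∈ range (n l), a k * expOut n w l k x) atTop atTop :=
  tendsto_sum_mul_atTop (nonempty_range_iff.2 (hpos l hl.le).ne')
    (fun k hk => ha k (mem_range.1 hk))
    (fun _ hk => tendsto_expOut_atTop hpos hw hl.le (mem_range.1 hk))

theorem expOut_succ_isEquivalent (hpos : ∀ l ≤ L, 0 < n l) (hw : Wo L n w) {l i : ℕ}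
    (hl : l < L) (hi : i < n (l + 1)) :
    expOut n w (l + 1) i ~[atTop] fun x => exp (netInput n w l i x) :=
  isEquivalent_of_tendsto_sub (c := -1)
    (tendsto_const_nhds.congr fun x => by simp [expOut_succ])
    (tendsto_exp_atTop.comp (tendsto_sum_mul_expOut_atTop hpos hw hl (hw.1 l hl i hi)))

theorem expOut_succ_isLittleO (hpos : ∀ l ≤ L, 0 < n l) (hw : Wo L n w) {l i i' : ℕ}
    (hl : l < L) (hii' : i < i') (hi' : i' < n (l + 1)) :
    expOut n w (l + 1) i' =o[atTop] expOut n w (l + 1) i := by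
  have hgap : Tendsto (fun x => netInput n w l i x - netInput n w l i' x) atTop atTop := by
    simp only [netInput, ← sum_sub_distrib, ← sub_mul]
    exact tendsto_sum_mul_expOut_atTop hpos hw hl
      (fun k hk => sub_pos.2 (hw.2 l hl k hk i i' hii' hi'))
  exact (expOut_succ_isEquivalent hpos hw hl hi').isBigO.trans_isLittleO
    ((isLittleO_exp_comp_exp_comp.2 hgap).trans_isBigO
      (expOut_succ_isEquivalent hpos hw hl (hii'.trans hi')).isBigO_symm)

end Growth

def LayerIdentifiable (n : ℕ → ℕ) (w w' : ℕ → ℕ → ℕ → ℝ) (l : ℕ) : Prop :=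
  ∀ (u v : ℕ → ℝ) (c : ℝ), (∀ j < n l, 0 < u j) → (∀ j < n l, 0 < v j) →
    Tendsto (fun x => ∑ j ∈ range (n l), (u j * expOut n w l j x - v j * expOut n w' l j x))
      atTop (𝓝 c) →
    c = 0 ∧ (∀ j < n l, u j = v j) ∧ AgreeBelow n w w' l

theorem eq_zero_and_eq_zero_of_tendsto_mul {a c : ℝ} (h : Tendsto (fun x => a * x) atTop (𝓝 c)) :
    a = 0 ∧ c = 0 := by
  have ha : a = 0 := by
    by_contra ha
    refine not_tendsto_nhds_of_tendsto_atTop tendsto_id (c / a) ?_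
    exact (h.div_const a).congr fun x => mul_div_cancel_left₀ x ha
  subst ha
  exact ⟨rfl, tendsto_nhds_unique h (by simp)⟩

theorem layerIdentifiable_zero {n : ℕ → ℕ} {w w' : ℕ → ℕ → ℕ → ℝ} (hn0 : n 0 = 1) :
    LayerIdentifiable n w w' 0 := by
  intro u v c _ _ h
  simp only [hn0, range_one, sum_singleton, expOut, ← sub_mul] at h
  obtain ⟨huv, hc⟩ := eq_zero_and_eq_zero_of_tendsto_mul h
  refine ⟨hc, fun j hj => ?_, fun _ h => absurd h (Nat.not_lt_zero _)⟩
  obtain rfl : j = 0 := by omega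
  exact sub_eq_zero.1 huv

section Identification

variable {L : ℕ} {n : ℕ → ℕ} {w w' : ℕ → ℕ → ℕ → ℝ}

theorem leading_node_identified (hpos : ∀ l ≤ L, 0 < n l) (hw : Wo L n w) (hw' : Wo L n w')
    {m : ℕ} (hm : m < L) (IH : LayerIdentifiable n w w' m) {j₀ : ℕ} {s : Finset ℕ}
    (hs : ∀ j ∈ s, j₀ < j ∧ j < n (m + 1)) (hj₀ : j₀ < n (m + 1)) {u v : ℕ → ℝ} {c : ℝ}
    (hu : 0 < u j₀) (hv : 0 < v j₀)
    (h : Tendsto (fun x => ∑ j ∈ insert j₀ s,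
      (u j * expOut n w (m + 1) j x - v j * expOut n w' (m + 1) j x)) atTop (𝓝 c)) :
    u j₀ = v j₀ ∧ (∀ k < n m, w (m + 1) j₀ k = w' (m + 1) j₀ k) ∧ AgreeBelow n w w' m := by
  have hj₀s : j₀ ∉ s := fun hj => (hs j₀ hj).1.false
  have hP := isEquivalent_sum_insert (f := fun j x => u j * expOut n w (m + 1) j x) hj₀s
    fun j hj => ((expOut_succ_isLittleO hpos hw hm (hs j hj).1 (hs j hj).2).const_mul_left
      (u j)).const_mul_right hu.ne'
  have hQ := isEquivalent_sum_insert (f := fun j x => v j * expOut n w' (m + 1) j x) hj₀s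
    fun j hj => ((expOut_succ_isLittleO hpos hw' hm (hs j hj).1 (hs j hj).2).const_mul_left
      (v j)).const_mul_right hv.ne'
  have hPQ := isEquivalent_of_tendsto_sub (h.congr fun x => sum_sub_distrib ..)
    (hQ.symm.tendsto_atTop
      ((tendsto_expOut_atTop hpos hw' (Nat.succ_le_of_lt hm) hj₀).const_mul_atTop hv))
  have hexp : (fun x => u j₀ * exp (netInput n w m j₀ x)) ~[atTop]
      fun x => v j₀ * exp (netInput n w' m j₀ x) :=
    (IsEquivalent.refl.mul (expOut_succ_isEquivalent hpos hw hm hj₀)).symm.trans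
      ((hP.symm.trans (hPQ.trans hQ)).trans
        (IsEquivalent.refl.mul (expOut_succ_isEquivalent hpos hw' hm hj₀)))
  have hlim := tendsto_log_div_of_isEquivalent hu hv hexp
  simp only [netInput, ← sum_sub_distrib] at hlim
  obtain ⟨hc, hrow, hagree⟩ := IH _ _ _ (hw.1 m hm j₀ hj₀) (hw'.1 m hm j₀ hj₀) hlim
  exact ⟨((div_eq_one_iff_eq hu.ne').1 (eq_one_of_pos_of_log_eq_zero (div_pos hv hu) hc)).symm,
    hrow, hagree⟩

theorem nodes_identified_of_tendsto_sum (hpos : ∀ l ≤ L, 0 < n l) (hw : Wo L n w)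
    (hw' : Wo L n w') {m : ℕ} (hm : m < L) (IH : LayerIdentifiable n w w' m) {s : Finset ℕ}
    (hs : s ⊆ range (n (m + 1))) {u v : ℕ → ℝ} {c : ℝ} (hu : ∀ j ∈ s, 0 < u j)
    (hv : ∀ j ∈ s, 0 < v j)
    (h : Tendsto (fun x => ∑ j ∈ s,
      (u j * expOut n w (m + 1) j x - v j * expOut n w' (m + 1) j x)) atTop (𝓝 c)) :
    c = 0 ∧ ∀ j ∈ s, u j = v j ∧ (∀ k < n m, w (m + 1) j k = w' (m + 1) j k) ∧
      AgreeBelow n w w' m := by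
  induction s using Finset.induction_on_min with
  | empty => exact ⟨(by simpa using h : (0 : ℝ) = c).symm, by simp⟩
  | insert j₀ s hlt ih =>
    have hj₀ : j₀ < n (m + 1) := mem_range.1 (hs (mem_insert_self j₀ s))
    obtain ⟨huv, hrow, hbelow⟩ := leading_node_identified hpos hw hw' hm IH
      (fun j hj => ⟨hlt j hj, mem_range.1 (hs (mem_insert_of_mem hj))⟩) hj₀
      (hu j₀ (mem_insert_self j₀ s)) (hv j₀ (mem_insert_self j₀ s)) h
    have hout : expOut n w (m + 1) j₀ = expOut n w' (m + 1) j₀ := by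
      funext x
      rw [expOut_succ, expOut_succ, netInput_congr hbelow hrow]
    obtain ⟨hc, hnodes⟩ := ih ((subset_insert j₀ s).trans hs)
      (fun j hj => hu j (mem_insert_of_mem hj)) (fun j hj => hv j (mem_insert_of_mem hj))
      (by simpa [sum_insert (fun hj => (hlt j₀ hj).false), hout, huv] using h)
    refine ⟨hc, fun j hj => ?_⟩
    rcases mem_insert.1 hj with rfl | hj
    · exact ⟨huv, hrow, hbelow⟩
    · exact hnodes j hj

theorem layerIdentifiable_succ (hpos : ∀ l ≤ L, 0 < n l) (hw : Wo L n w) (hw' : Wo L n w')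
    {m : ℕ} (hm : m < L) (IH : LayerIdentifiable n w w' m) :
    LayerIdentifiable n w w' (m + 1) := by
  intro u v c hu hv h
  obtain ⟨hc, hnodes⟩ := nodes_identified_of_tendsto_sum hpos hw hw' hm IH subset_rfl
    (fun j hj => hu j (mem_range.1 hj)) (fun j hj => hv j (mem_range.1 hj)) h
  have hbelow := (hnodes 0 (mem_range.2 (hpos (m + 1) hm))).2.2
  refine ⟨hc, fun j hj => (hnodes j (mem_range.2 hj)).1, fun l hl i hi => ?_⟩
  rcases Nat.lt_succ_iff_lt_or_eq.1 hl with hl | rfl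
  · exact hbelow l hl i hi
  · exact (hnodes i (mem_range.2 hi)).2.1

end Identification

theorem stmt_16_general (L : ℕ) (n : ℕ → ℕ) (hn0 : n 0 = 1) (hnL : n L = 1)
    (hpos : ∀ l ≤ L, 0 < n l)
    (w w' : ℕ → ℕ → ℕ → ℝ) (hw : Wo L n w) (hw' : Wo L n w')
    (hF : ∀ x : ℝ, expOut n w L 0 x = expOut n w' L 0 x) :
    ∀ l < L, ∀ i < n (l + 1), ∀ j < n l, w (l + 1) i j = w' (l + 1) i j := by
  have hlayers : ∀ l ≤ L, LayerIdentifiable n w w' l := by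
    intro l hl
    induction l with
    | zero => exact layerIdentifiable_zero hn0
    | succ m ih => exact layerIdentifiable_succ hpos hw hw' hl (ih (by omega))
  have hsink : Tendsto (fun x => ∑ j ∈ range (n L),
      (1 * expOut n w L j x - 1 * expOut n w' L j x)) atTop (𝓝 0) := by
    simp [hnL, hF]
  exact (hlayers L le_rfl (fun _ => 1) (fun _ => 1) 0 (fun _ _ => one_pos) (fun _ _ => one_pos)
    hsink).2.2

/-- **(Proposition pr:exp: identifiability of the exponential network).** Let a
fully-connected layered feed-forward network of depth `L ≥ 1` with one source and one sink
have activation `f x = e^x - 1`. If `W, W̃ ∈ W_o` are two weight families whose measured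
functions coincide on all of `ℝ`, then `W = W̃` (they agree on every edge of the network):
the network with this activation is identifiable within the class `W_o` by exciting the
source and measuring the sink. -/
theorem stmt_16 (L : ℕ) (hL : 1 ≤ L) (n : ℕ → ℕ) (hn0 : n 0 = 1) (hnL : n L = 1)
    (hpos : ∀ l ≤ L, 0 < n l)
    (w w' : ℕ → ℕ → ℕ → ℝ) (hw : Wo L n w) (hw' : Wo L n w')
    (hF : ∀ x : ℝ, expOut n w L 0 x = expOut n w' L 0 x) :
    ∀ l < L, ∀ i < n (l + 1), ∀ j < n l, w (l + 1) i j = w' (l + 1) i j :=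
  stmt_16_general L n hn0 hnL hpos w w' hw hw' hF
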